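/- arXiv:2501.15465 — 4 statements merged into one kernel-verified Lean document; each statement's English description precedes it below -/
import Mathlib

section
/- Let n ≥ 1 and let m, c be nonnegative integers. There exists a subspace of type (m,c)_{[s]} in F₂^{2n} (i.e., an m-dimensional subspace whose Gram matrix under the symplectic inner product has rank 2c) if and only if 2c ≤ m ≤ n + c. -/
noncomputable section

abbrev F2 : Type := ZMod 2
/-- `F₂^{2n}`, with elements written `(a | b)` for `a b : Fin n → F2`. -/
abbrev V2 (n : ℕ) : Type := (Fin n → F2) × (Fin n → F2)

/-- The symplectic inner product `((a|b), (a'|b'))ₛ = a·b'ᵀ + b·a'ᵀ` on `F₂^{2n}`,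
as an `F₂`-bilinear form. -/
def sympBilin (n : ℕ) : LinearMap.BilinForm F2 (V2 n) :=
  LinearMap.mk₂ F2 (fun u v => ∑ i, (u.1 i * v.2 i + u.2 i * v.1 i))
    (by
      intro m₁ m₂ n
      simp only [Prod.fst_add, Prod.snd_add, Pi.add_apply]
      rw [← Finset.sum_add_distrib]
      exact Finset.sum_congr rfl (by intros; ring))
    (by
      intro c m n
      simp only [Prod.smul_fst, Prod.smul_snd, Pi.smul_apply, smul_eq_mul, Finset.mul_sum]
      exact Finset.sum_congr rfl (by intros; ring))
    (by
      intro m n₁ n₂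
      simp only [Prod.fst_add, Prod.snd_add, Pi.add_apply]
      rw [← Finset.sum_add_distrib]
      exact Finset.sum_congr rfl (by intros; ring))
    (by
      intro c m n
      simp only [Prod.smul_fst, Prod.smul_snd, Pi.smul_apply, smul_eq_mul, Finset.mul_sum]
      exact Finset.sum_congr rfl (by intros; ring))

/-- The symplectic dual `V^{⊥s} = {w | ∀ v ∈ V, (v, w)ₛ = 0}` of a subspace `V ⊆ F₂^{2n}`. -/
def sympDual (n : ℕ) (V : Submodule F2 (V2 n)) : Submodule F2 (V2 n) :=
  (sympBilin n).orthogonal V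

/-- `V ⊆ F₂^{2n}` is of type `(m, c)_{[s]}` if it is `m`-dimensional and the Gram matrix
of a basis with respect to the symplectic inner product has `F₂`-rank `2c`. -/
def IsTypeS (n m c : ℕ) (V : Submodule F2 (V2 n)) : Prop :=
  Module.finrank F2 V = m ∧
  ∃ b : Module.Basis (Fin m) F2 V,
    (Matrix.of fun i j => sympBilin n (b i : V2 n) (b j : V2 n)).rank = 2 * c

/-!
The Gram matrix of a basis of `V` has rank `dim V - dim R`, where `R = V ∩ V^{⊥s}` is the radical
of `V`; so `V` has type `(m, c)` exactly when `dim V = m` and `dim R = m - 2c`, forcing `2c ≤ m`.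
Since `V ⊆ R^{⊥s}` and the symplectic form is nondegenerate, `m ≤ 2n - dim R = 2n - m + 2c`.
Conversely, with `d = m - c`, the span of `e₁, …, e_d, f₁, …, f_c` has radical spanned by
`e_{c+1}, …, e_d`.
-/

open Module Submodule

lemma Module.Basis.finrank_span_image_finset {K E ι : Type*} [Field K] [AddCommGroup E]
    [Module K E] (bb : Basis ι K E) (S : Finset ι) :
    finrank K (span K (bb '' S)) = S.card := by
  have h := finrank_span_eq_card <|
    bb.linearIndependent.comp ((↑) : S → ι) Subtype.val_injective
  rw [Set.range_comp] at h
  convert h using 4 <;> simp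

namespace LinearMap.BilinForm

variable {K E ι : Type*} [Field K] [AddCommGroup E] [Module K E]

lemma rank_gram_add_finrank_inf_orthogonal [Fintype ι] [DecidableEq ι]
    (B : LinearMap.BilinForm K E) (W : Submodule K E) (b : Basis ι K W) :
    (Matrix.of fun i j => B (b i) (b j)).rank + finrank K ↥(W ⊓ B.orthogonal W) =
      Fintype.card ι := by
  have hgram : (Matrix.of fun i j => B (b i) (b j)) =
      LinearMap.toMatrix b b.dualBasis (B.restrict W).flip := by
    ext i j
    simp [LinearMap.toMatrix_apply]
  have hker : (LinearMap.ker (B.restrict W).flip).map W.subtype = W ⊓ B.orthogonal W := by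
    ext x
    simp [mem_orthogonal_iff, LinearMap.ext_iff, and_comm]
  have : FiniteDimensional K W := b.finiteDimensional_of_finite
  rw [hgram, Matrix.rank_eq_finrank_range_toLin _ b.dualBasis b, Matrix.toLin_toMatrix,
    ← hker, finrank_map_subtype_eq, LinearMap.finrank_range_add_finrank_ker,
    finrank_eq_card_basis b]

lemma finrank_add_finrank_inf_orthogonal_le [FiniteDimensional K E]
    {B : LinearMap.BilinForm K E} (hB : B.Nondegenerate) (hB₀ : B.IsRefl) (W : Submodule K E) :
    finrank K W + finrank K ↥(W ⊓ B.orthogonal W) ≤ finrank K E := by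
  have hle : W ≤ B.orthogonal (W ⊓ B.orthogonal W) := fun x hx y hy => hB₀ _ _ (hy.2 x hx)
  have := Submodule.finrank_mono hle
  rw [finrank_orthogonal hB] at this
  have := Submodule.finrank_le (W ⊓ B.orthogonal W)
  omega

lemma mem_orthogonal_span_iff {B : LinearMap.BilinForm K E} {s : Set E} {x : E} :
    x ∈ B.orthogonal (span K s) ↔ ∀ y ∈ s, B y x = 0 := by
  have : x ∈ B.orthogonal (span K s) ↔ span K s ≤ LinearMap.ker (B.flip x) := by
    simp [SetLike.le_def, mem_orthogonal_iff]
  rw [this, Submodule.span_le]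
  rfl

lemma span_image_inf_orthogonal [DecidableEq ι] {B : LinearMap.BilinForm K E} (bb : Basis ι K E)
    {σ : ι → ι} (hσ : Function.Involutive σ) (hB : ∀ j x, B (bb j) x = bb.repr x (σ j))
    (S : Finset ι) :
    span K (bb '' S) ⊓ B.orthogonal (span K (bb '' S)) =
      span K (bb '' (S.filter fun j => σ j ∉ S)) := by
  ext x
  simp only [Submodule.mem_inf, mem_orthogonal_span_iff, Set.forall_mem_image, hB,
    Basis.mem_span_image, Set.subset_def, Finsupp.mem_support_iff, Finset.coe_filter,
    Finset.mem_coe, Set.mem_ofPred_eq]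
  constructor
  · rintro ⟨hsupp, horth⟩ j hj
    refine ⟨hsupp j hj, fun hσj => hj ?_⟩
    simpa [hσ j] using horth hσj
  · intro h
    refine ⟨fun j hj => (h j hj).1, fun j hj => ?_⟩
    by_contra hne
    exact (h _ hne).2 (by rwa [hσ j])

end LinearMap.BilinForm

def stdBasisV2 (n : ℕ) : Basis (Fin n ⊕ Fin n) F2 (V2 n) :=
  (Pi.basisFun F2 (Fin n)).prod (Pi.basisFun F2 (Fin n))

lemma sympBilin_stdBasisV2 (n : ℕ) (j : Fin n ⊕ Fin n) (x : V2 n) :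
    sympBilin n (stdBasisV2 n j) x = (stdBasisV2 n).repr x j.swap := by
  rcases j with i | i <;>
    simp [stdBasisV2, sympBilin, Basis.prod_repr_inl, Basis.prod_repr_inr, Pi.single_apply]

lemma sympBilin_comm (n : ℕ) (u v : V2 n) : sympBilin n u v = sympBilin n v u := by
  simp only [sympBilin, LinearMap.mk₂_apply]
  exact Finset.sum_congr rfl fun _ _ => by ring

lemma sympBilin_isRefl (n : ℕ) : (sympBilin n).IsRefl := fun u v h => by
  rwa [sympBilin_comm]

lemma sympBilin_nondegenerate (n : ℕ) : (sympBilin n).Nondegenerate := by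
  refine (sympBilin_isRefl n).nondegenerate_iff_separatingRight.mpr fun x hx => ?_
  refine (stdBasisV2 n).repr.injective (Finsupp.ext fun j => ?_)
  simpa [sympBilin_stdBasisV2] using hx (stdBasisV2 n j.swap)

lemma finrank_V2 (n : ℕ) : finrank F2 (V2 n) = 2 * n := by
  rw [finrank_eq_card_basis (stdBasisV2 n), Fintype.card_sum, Fintype.card_fin]
  ring

lemma exists_finrank_eq_finrank_inf_sympDual_eq {n d c : ℕ} (hcd : c ≤ d) (hdn : d ≤ n) :
    ∃ V : Submodule F2 (V2 n),
      finrank F2 V = d + c ∧ finrank F2 ↥(V ⊓ sympDual n V) = d - c := by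
  set A : Finset (Fin n) := {i | (i : ℕ) < d}
  set C : Finset (Fin n) := {i | (i : ℕ) < c}
  have hA : A.card = d := by simp [A, Fin.card_filter_val_lt, hdn]
  have hC : C.card = c := by simp [C, Fin.card_filter_val_lt, hcd.trans hdn]
  have hCA : C ⊆ A := fun i => by simp [A, C]; omega
  have hrad : ((A.disjSum C).filter fun j => j.swap ∉ A.disjSum C) = (A \ C).disjSum ∅ := by
    ext (i | i) <;> simp [A, C]
    omega
  refine ⟨span F2 (stdBasisV2 n '' ↑(A.disjSum C)), ?_, ?_⟩
  · rw [Basis.finrank_span_image_finset, Finset.card_disjSum, hA, hC]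
  · rw [sympDual,
      LinearMap.BilinForm.span_image_inf_orthogonal _ Sum.swap_swap (sympBilin_stdBasisV2 n), hrad,
      Basis.finrank_span_image_finset, Finset.card_disjSum, Finset.card_sdiff_of_subset hCA,
      hA, hC, Finset.card_empty, add_zero]

lemma isTypeS_iff {n m c : ℕ} {V : Submodule F2 (V2 n)} :
    IsTypeS n m c V ↔ finrank F2 V = m ∧ 2 * c + finrank F2 ↥(V ⊓ sympDual n V) = m := by
  constructor
  · rintro ⟨hV, b, hb⟩
    have := (sympBilin n).rank_gram_add_finrank_inf_orthogonal V b
    rw [hb, Fintype.card_fin] at this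
    exact ⟨hV, this⟩
  · rintro ⟨hV, hrad⟩
    let b := finBasisOfFinrankEq F2 V hV
    have := (sympBilin n).rank_gram_add_finrank_inf_orthogonal V b
    rw [Fintype.card_fin] at this
    exact ⟨hV, b, by unfold sympDual at hrad; omega⟩

theorem stmt1_general (n m c : ℕ) :
    (∃ V : Submodule F2 (V2 n), IsTypeS n m c V) ↔ 2 * c ≤ m ∧ m ≤ n + c := by
  simp_rw [isTypeS_iff]
  constructor
  · rintro ⟨V, hV, hrad⟩
    have := LinearMap.BilinForm.finrank_add_finrank_inf_orthogonal_le
      (sympBilin_nondegenerate n) (sympBilin_isRefl n) V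
    rw [hV, finrank_V2] at this
    unfold sympDual at hrad
    omega
  · rintro ⟨hcm, hmn⟩
    obtain ⟨V, hV, hrad⟩ := exists_finrank_eq_finrank_inf_sympDual_eq
      (n := n) (d := m - c) (c := c) (by omega) (by omega)
    exact ⟨V, by omega, by omega⟩

/-- a subspace of type `(m, c)_{[s]}` exists in `F₂^{2n}` (for `n ≥ 1`)
if and only if `2c ≤ m ≤ n + c`. -/
theorem stmt1 (n m c : ℕ) (hn : 1 ≤ n) :
    (∃ V : Submodule F2 (V2 n), IsTypeS n m c V) ↔ 2 * c ≤ m ∧ m ≤ n + c :=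
  stmt1_general n m c
end
end

section
/- Let C ⊆ F₄ⁿ be an F₄-linear code of dimension k with generator matrix G (a k × n matrix over F₄ of rank k whose rows span C). If the F₄-rank of G G† equals e, then the trace radical satisfies dim_{F₂}(C ∩ C^{⊥t}) = 2(k − e); that is, C, viewed as an (n, 2^{2k}) additive code, is of type (2k, e)_{[t]}. -/
noncomputable section

abbrev F4 : Type := GaloisField 2 2

/-- The trace inner product `(u, v)ₜ = Σⱼ (uⱼ vⱼ² + uⱼ² vⱼ)` on `F₄ⁿ`. -/
def trInner {n : ℕ} (u v : Fin n → F4) : F4 :=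
  ∑ j, (u j * (v j) ^ 2 + (u j) ^ 2 * v j)

/-- The trace dual `C^{⊥t} = {u ∈ F₄ⁿ | ∀ v ∈ C, (u, v)ₜ = 0}` of a set `C ⊆ F₄ⁿ`,
as an `F₂`-subspace of `F₄ⁿ`. -/
def trDualSub {n : ℕ} (C : Set (Fin n → F4)) : Submodule F2 (Fin n → F4) where
  carrier := {u | ∀ v ∈ C, trInner u v = 0}
  zero_mem' := by intro v hv; simp [trInner]
  add_mem' := by
    intro a b ha hb v hv
    have h : trInner (a + b) v = trInner a v + trInner b v := by
      simp only [trInner, Pi.add_apply]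
      rw [← Finset.sum_add_distrib]
      refine Finset.sum_congr rfl ?_
      intro j _
      have h2 : (2 : F4) = 0 := CharTwo.two_eq_zero
      linear_combination (a j * b j * v j) * h2
    rw [h, ha v hv, hb v hv, add_zero]
  smul_mem' := by
    intro c a ha v hv
    have hc : (algebraMap F2 F4 c) ^ 2 = algebraMap F2 F4 c := by
      have h2 : c ^ 2 = c := by revert c; decide
      rw [← map_pow, h2]
    have h : trInner (c • a) v = algebraMap F2 F4 c * trInner a v := by
      simp only [trInner, Pi.smul_apply, Algebra.smul_def, Finset.mul_sum]
      refine Finset.sum_congr rfl ?_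
      intro j _
      rw [mul_pow, hc]; ring
    rw [h, ha v hv, mul_zero]

/-- Entrywise conjugate transpose `G† = (Ḡ)ᵀ` of a matrix over `F₄` (conjugation is `x ↦ x²`). -/
def conjT {k n : ℕ} (G : Matrix (Fin k) (Fin n) F4) : Matrix (Fin n) (Fin k) F4 :=
  Matrix.transpose (G.map fun x => x ^ 2)

/-!
Write `h(u, v) = Σⱼ uⱼ v̄ⱼ` for the hermitian form on `F₄ⁿ`; then `(u, v)ₜ = h(u, v) + h(u, v)²` is
the trace of `h(u, v)`. Since `h(u, c • v) = c̄ h(u, v)` and a trace that vanishes on a whole line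
`F₄ · h` forces `h = 0`, the trace dual of an `F₄`-linear code `C` is its hermitian dual, so the
trace radical is the `F₄`-subspace `C ∩ C^{⊥h}`. Writing `u = x G`, the vector `u` is
`h`-orthogonal to `C` iff `x G G† = 0`; hence the radical is the image of the left kernel of
`G G†` under the injective map `x ↦ x G`, of `F₄`-dimension `k - e` and `F₂`-dimension `2(k - e)`.
-/

open Matrix Module

theorem Matrix.linearIndependent_row_iff_rank_eq_card {m n K : Type*} [Field K] [Fintype m]
    [Fintype n] {A : Matrix m n K} : LinearIndependent K A.row ↔ A.rank = Fintype.card m := by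
  rw [linearIndependent_iff_card_eq_finrank_span, A.rank_eq_finrank_span_row, eq_comm]
  rfl

theorem Matrix.finrank_ker_vecMulLinear {m n K : Type*} [Field K] [Fintype m] [Fintype n]
    (A : Matrix m n K) :
    finrank K (LinearMap.ker A.vecMulLinear) = Fintype.card m - A.rank := by
  have := LinearMap.finrank_range_add_finrank_ker A.vecMulLinear
  rw [range_vecMulLinear, ← rank_eq_finrank_span_row, finrank_fintype_fun_eq_card] at this
  omega

theorem Submodule.finrank_restrictScalars {F K V : Type*} [Field F] [Field K] [Algebra F K]
    [AddCommGroup V] [Module K V] [Module F V] [IsScalarTower F K V] (p : Submodule K V) :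
    finrank F (p.restrictScalars F) = finrank F K * finrank K p :=
  ((p.restrictScalarsEquiv F K V).restrictScalars F).finrank_eq.trans
    (finrank_mul_finrank F K p).symm

namespace F4

lemma pow_four_eq_self (x : F4) : x ^ 4 = x := by
  have : Fintype F4 := Fintype.ofFinite F4
  have h := FiniteField.pow_card x
  rwa [Fintype.card_eq_nat_card, GaloisField.card 2 2 two_ne_zero] at h

lemma exists_sq_add_self_eq_one : ∃ w : F4, w ^ 2 + w = 1 := by
  classical
  have : Fintype F4 := Fintype.ofFinite F4
  obtain ⟨w, -, hw⟩ := Finset.exists_mem_notMem_of_card_lt_card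
    (s := ({0, 1} : Finset F4)) (t := Finset.univ) (by
      rw [Finset.card_univ, Fintype.card_eq_nat_card, GaloisField.card 2 2 two_ne_zero]
      exact Finset.card_le_two.trans_lt (by norm_num))
  simp only [Finset.mem_insert, Finset.mem_singleton, not_or] at hw
  have hroots : w * (w + 1) * (w ^ 2 + w + 1) = 0 := by
    linear_combination pow_four_eq_self w + (w + w ^ 2 + w ^ 3) * CharTwo.two_eq_zero (R := F4)
  have hw1 : w + 1 ≠ 0 := fun h => hw.2 (by linear_combination h - CharTwo.two_eq_zero (R := F4))
  refine ⟨w, ?_⟩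
  have := (mul_eq_zero.mp hroots).resolve_left (mul_ne_zero hw.1 hw1)
  linear_combination this - CharTwo.two_eq_zero (R := F4)

end F4

def herm {n : ℕ} (u v : Fin n → F4) : F4 := ∑ j, u j * v j ^ 2

lemma herm_zero_right {n : ℕ} (u : Fin n → F4) : herm u 0 = 0 := by
  simp [herm]

lemma herm_add_right {n : ℕ} (u a b : Fin n → F4) :
    herm u (a + b) = herm u a + herm u b := by
  simp only [herm, Pi.add_apply, CharTwo.add_sq, mul_add, Finset.sum_add_distrib]

lemma herm_smul_right {n : ℕ} (u v : Fin n → F4) (c : F4) :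
    herm u (c • v) = c ^ 2 * herm u v := by
  simp only [herm, Pi.smul_apply, smul_eq_mul, Finset.mul_sum]
  exact Finset.sum_congr rfl fun j _ => by ring

lemma trInner_eq_herm_add_sq {n : ℕ} (u v : Fin n → F4) :
    trInner u v = herm u v + herm u v ^ 2 := by
  rw [trInner, herm, CharTwo.sum_sq, ← Finset.sum_add_distrib]
  refine Finset.sum_congr rfl fun j _ => ?_
  linear_combination -(u j) ^ 2 * F4.pow_four_eq_self (v j)

lemma herm_eq_zero_of_forall_trInner_smul_eq_zero {n : ℕ} {u v : Fin n → F4}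
    (h : ∀ c : F4, trInner u (c • v) = 0) : herm u v = 0 := by
  obtain ⟨w, hw⟩ := F4.exists_sq_add_self_eq_one
  have h1 := h 1
  have hw' := h w
  rw [trInner_eq_herm_add_sq, herm_smul_right] at h1 hw'
  -- `c = 1` gives `h² = h`, and then `c = w` gives `0 = w² h + w⁴ h² = (w² + w) h = h`.
  linear_combination hw' - w ^ 4 * h1 + herm u v * F4.pow_four_eq_self w
    + w * herm u v * CharTwo.two_eq_zero (R := F4) - herm u v * hw

lemma mem_trDualSub_iff {n : ℕ} (C : Submodule F4 (Fin n → F4)) (u : Fin n → F4) :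
    u ∈ trDualSub (C : Set (Fin n → F4)) ↔ ∀ v ∈ C, herm u v = 0 := by
  refine ⟨fun hu v hv => herm_eq_zero_of_forall_trInner_smul_eq_zero fun c =>
    hu _ (C.smul_mem c hv), fun hu v hv => ?_⟩
  rw [trInner_eq_herm_add_sq, hu v hv, zero_pow two_ne_zero, add_zero]

lemma herm_row_eq_vecMul_conjT {k n : ℕ} (G : Matrix (Fin k) (Fin n) F4) (u : Fin n → F4)
    (i : Fin k) : herm u (G i) = (u ᵥ* conjT G) i :=
  rfl

lemma forall_mem_span_rows_herm_eq_zero_iff {k n : ℕ} (G : Matrix (Fin k) (Fin n) F4)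
    (u : Fin n → F4) :
    (∀ v ∈ Submodule.span F4 (Set.range fun i => G i), herm u v = 0) ↔ u ᵥ* conjT G = 0 := by
  simp only [funext_iff, Pi.zero_apply, ← herm_row_eq_vecMul_conjT]
  refine ⟨fun h i => h (G i) (Submodule.subset_span ⟨i, rfl⟩), fun h v hv => ?_⟩
  induction hv using Submodule.span_induction with
  | mem v hv =>
    obtain ⟨i, rfl⟩ := hv
    exact h i
  | zero => exact herm_zero_right u
  | add a b _ _ ha hb => rw [herm_add_right, ha, hb, add_zero]
  | smul c a _ ha => rw [herm_smul_right, ha, mul_zero]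

def trRadical {n : ℕ} (C : Submodule F4 (Fin n → F4)) : Submodule F2 (Fin n → F4) :=
  C.restrictScalars F2 ⊓ trDualSub (C : Set (Fin n → F4))

theorem trRadical_span_rows {k n : ℕ} (G : Matrix (Fin k) (Fin n) F4) :
    trRadical (Submodule.span F4 (Set.range fun i => G i)) =
      ((LinearMap.ker (G * conjT G).vecMulLinear).map G.vecMulLinear).restrictScalars F2 := by
  have hC : Submodule.span F4 (Set.range fun i => G i) = LinearMap.range G.vecMulLinear :=
    (range_vecMulLinear G).symm
  ext u
  simp only [trRadical, Submodule.mem_inf, Submodule.restrictScalars_mem, mem_trDualSub_iff,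
    forall_mem_span_rows_herm_eq_zero_iff, Submodule.mem_map, LinearMap.mem_ker,
    vecMulLinear_apply, ← vecMul_vecMul]
  rw [hC, LinearMap.mem_range]
  constructor
  · rintro ⟨⟨y, rfl⟩, hy⟩
    exact ⟨y, hy, rfl⟩
  · rintro ⟨y, hy, rfl⟩
    exact ⟨⟨y, rfl⟩, hy⟩

theorem stmt7_general (n k e : ℕ) (C : Submodule F4 (Fin n → F4))
    (G : Matrix (Fin k) (Fin n) F4)
    (hspan : C = Submodule.span F4 (Set.range fun i => G i))
    (hrank : G.rank = k)
    (he : (G * conjT G).rank = e) :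
    Module.finrank F2
      ↥(C.restrictScalars F2 ⊓ trDualSub (C : Set (Fin n → F4))) = 2 * (k - e) := by
  have hG : Function.Injective G.vecMulLinear := vecMul_injective_iff.mpr
    (linearIndependent_row_iff_rank_eq_card.mpr (by rw [hrank, Fintype.card_fin]))
  subst hspan
  change finrank F2 (trRadical _) = _
  rw [trRadical_span_rows, Submodule.finrank_restrictScalars, GaloisField.finrank 2 two_ne_zero,
    ← (Submodule.equivMapOfInjective _ hG _).finrank_eq, finrank_ker_vecMulLinear, he,
    Fintype.card_fin]

/-- if an `F₄`-linear code `C ⊆ F₄ⁿ` of dimension `k` has a generator matrix `G`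
(of rank `k`, whose rows span `C`) with `rank(G G†) = e`, then the trace radical satisfies
`dim_{F₂}(C ∩ C^{⊥t}) = 2(k - e)`, i.e. `C` is an additive code of type `(2k, e)_{[t]}`. -/
theorem stmt7 (n k e : ℕ) (C : Submodule F4 (Fin n → F4)) (hk : Module.finrank F4 C = k)
    (G : Matrix (Fin k) (Fin n) F4)
    (hspan : C = Submodule.span F4 (Set.range fun i => G i))
    (hrank : G.rank = k)
    (he : (G * conjT G).rank = e) :
    Module.finrank F2
      ↥(C.restrictScalars F2 ⊓ trDualSub (C : Set (Fin n → F4))) = 2 * (k - e) :=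
  stmt7_general n k e C G hspan hrank he

end
end

section
/- Let n = 4 + 2m ≥ 4 be even and let C ⊆ F₄ⁿ be the F₄-linear code spanned by g₁ = (1,1,1,1,0,…,0) and g₂ = (0,1,ω,ω²,1,…,1) (g₂ has 1 in every coordinate after the fourth). Then: (i) dim_{F₄} C = 2; (ii) the trace radical R = C ∩ C^{⊥t} equals the set of F₄-scalar multiples of g₁, so dim_{F₂} R = 2 and every nonzero element of R has Hamming weight 4; and (iii) every element of C \ R (there are 12 of them) has Hamming weight exactly n − 1. (Hence C normalizes an [[n, 1, n−1; n−3]] EAQECC saturating the EA-Singleton bound.) -/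
noncomputable section

/-- The Hamming weight of `u ∈ F₄ⁿ`: the number of nonzero coordinates. -/
def wt {n : ℕ} (u : Fin n → F4) : ℕ := Set.ncard {i | u i ≠ 0}

/-- for even `n = 4 + 2m`, the `F₄`-linear code `C` spanned by
`g₁ = (1,1,1,1,0,…,0)` and `g₂ = (0,1,ω,ω²,1,…,1)` has `dim_{F₄} C = 2`, its trace radical
`R = C ∩ C^{⊥t}` is exactly the set of `F₄`-multiples of `g₁` (so `dim_{F₂} R = 2`, with all
nonzero elements of weight 4), and all 12 elements of `C \ R` have Hamming weight `n - 1`. -/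
theorem stmt8 (m n : ℕ) (hn : n = 4 + 2 * m) (ω : F4) (hω : ω ^ 2 + ω + 1 = 0)
    (g₁ g₂ : Fin n → F4)
    (hg₁ : g₁ = fun i : Fin n => if (i : ℕ) < 4 then 1 else 0)
    (hg₂ : g₂ = fun i : Fin n =>
      if (i : ℕ) = 0 then 0 else if (i : ℕ) = 1 then 1 else
      if (i : ℕ) = 2 then ω else if (i : ℕ) = 3 then ω ^ 2 else 1) :
    let C := Submodule.span F4 {g₁, g₂}
    let R := C.restrictScalars F2 ⊓ trDualSub (C : Set (Fin n → F4))
    Module.finrank F4 C = 2 ∧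
    (R : Set (Fin n → F4)) = {x | ∃ c : F4, x = c • g₁} ∧
    Module.finrank F2 R = 2 ∧
    (∀ x ∈ R, x ≠ 0 → wt x = 4) ∧
    (∀ x ∈ C, x ∉ R → wt x = n - 1) ∧
    ((C : Set (Fin n → F4)) \ (R : Set (Fin n → F4))).ncard = 12 := by
  subst hn
  intro C R
  classical
  have h2 : (2 : F4) = 0 := CharTwo.two_eq_zero
  have hω0 : ω ≠ 0 := fun h => one_ne_zero (α := F4) (by rw [h] at hω; linear_combination hω)
  have hω1 : ω + 1 ≠ 0 := fun h => one_ne_zero (α := F4) (by linear_combination hω - ω * h)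
  have hων : ω ≠ 1 := fun h => hω1 (by rw [h]; linear_combination h2)
  have hsqne0 : ω ^ 2 ≠ 0 := pow_ne_zero 2 hω0
  -- all elements of F4
  haveI : Fintype F4 := Fintype.ofFinite F4
  have hcard4 : Fintype.card F4 = 4 := by
    rw [← Nat.card_eq_fintype_card]; exact GaloisField.card 2 2 (by norm_num)
  have hcases : ∀ x : F4, x = 0 ∨ x = 1 ∨ x = ω ∨ x = ω ^ 2 := by
    have d1ω2 : (1 : F4) ≠ ω ^ 2 := fun h => hω0 (by linear_combination h + hω - h2)
    have dωω2 : ω ≠ ω ^ 2 := fun h => one_ne_zero (α := F4) (by linear_combination h + hω - ω * h2)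
    have hsub : ({0, 1, ω, ω ^ 2} : Finset F4) = Finset.univ := by
      apply Finset.eq_univ_of_card
      rw [hcard4]
      rw [Finset.card_insert_of_notMem (by simp [zero_ne_one (α := F4), Ne.symm hω0, Ne.symm hsqne0]),
        Finset.card_insert_of_notMem (by simp [Ne.symm hων, d1ω2]),
        Finset.card_insert_of_notMem (by simp [dωω2]), Finset.card_singleton]
    intro x
    have hx := Finset.mem_univ x
    rw [← hsub] at hx
    simpa using hx
  -- membership characterizations
  have hmemC : ∀ x, x ∈ C ↔ ∃ a b : F4, a • g₁ + b • g₂ = x := fun x => Submodule.mem_span_pair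
  have hmemR : ∀ x, x ∈ R ↔ x ∈ C ∧ ∀ v ∈ (C : Set (Fin (4 + 2 * m) → F4)), trInner x v = 0 :=
    fun x => Iff.rfl
  -- the generic sum splitting lemma
  have hsum : ∀ {M : Type} [AddCommMonoid M] (F : F4 → F4 → M),
      ∑ j : Fin (4 + 2 * m), F (g₁ j) (g₂ j)
        = F 1 0 + F 1 1 + F 1 ω + F 1 (ω ^ 2) + (2 * m) • F 0 1 := by
    intro M _ F
    rw [Fin.sum_univ_add, Fin.sum_univ_four]
    have hco : ∀ j : Fin 4, ((Fin.castAdd (2 * m) j : Fin (4 + 2 * m)) : ℕ) = (j : ℕ) :=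
      fun j => rfl
    have hna : ∀ j : Fin (2 * m), ((Fin.natAdd 4 j : Fin (4 + 2 * m)) : ℕ) = 4 + (j : ℕ) :=
      fun j => rfl
    have v0 : ((Fin.castAdd (2 * m) (0 : Fin 4) : Fin (4 + 2 * m)) : ℕ) = 0 := rfl
    have v1 : ((Fin.castAdd (2 * m) (1 : Fin 4) : Fin (4 + 2 * m)) : ℕ) = 1 := rfl
    have v2 : ((Fin.castAdd (2 * m) (2 : Fin 4) : Fin (4 + 2 * m)) : ℕ) = 2 := rfl
    have v3 : ((Fin.castAdd (2 * m) (3 : Fin 4) : Fin (4 + 2 * m)) : ℕ) = 3 := rfl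
    have h10 : g₁ (Fin.castAdd (2 * m) 0) = 1 := by simp only [hg₁, v0]; norm_num
    have h11 : g₁ (Fin.castAdd (2 * m) 1) = 1 := by simp only [hg₁, v1]; norm_num
    have h12 : g₁ (Fin.castAdd (2 * m) 2) = 1 := by simp only [hg₁, v2]; norm_num
    have h13 : g₁ (Fin.castAdd (2 * m) 3) = 1 := by simp only [hg₁, v3]; norm_num
    have h20 : g₂ (Fin.castAdd (2 * m) 0) = 0 := by simp only [hg₂, v0]; norm_num
    have h21 : g₂ (Fin.castAdd (2 * m) 1) = 1 := by simp only [hg₂, v1]; norm_num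
    have h22 : g₂ (Fin.castAdd (2 * m) 2) = ω := by simp only [hg₂, v2]; norm_num
    have h23 : g₂ (Fin.castAdd (2 * m) 3) = ω ^ 2 := by simp only [hg₂, v3]; norm_num
    have htail : ∀ j : Fin (2 * m), F (g₁ (Fin.natAdd 4 j)) (g₂ (Fin.natAdd 4 j)) = F 0 1 := by
      intro j
      have hv := hna j
      have e1 : g₁ (Fin.natAdd 4 j) = 0 := by simp only [hg₁, hv]; exact if_neg (by omega)
      have e2 : g₂ (Fin.natAdd 4 j) = 1 := by
        simp only [hg₂, hv]
        rw [if_neg (by omega), if_neg (by omega), if_neg (by omega), if_neg (by omega)]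
      rw [e1, e2]
    rw [Finset.sum_congr rfl (fun j _ => htail j), Finset.sum_const, Finset.card_univ,
      Fintype.card_fin, h10, h11, h12, h13, h20, h21, h22, h23]
  -- key trace inner product formula
  have hkey : ∀ a b c d : F4,
      trInner (a • g₁ + b • g₂) (c • g₁ + d • g₂) = b * d ^ 2 + b ^ 2 * d := by
    intro a b c d
    have h := hsum (fun s t => (a * s + b * t) * (c * s + d * t) ^ 2
      + (a * s + b * t) ^ 2 * (c * s + d * t))
    rw [show trInner (a • g₁ + b • g₂) (c • g₁ + d • g₂)
      = ∑ j : Fin (4 + 2 * m), (fun s t => (a * s + b * t) * (c * s + d * t) ^ 2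
        + (a * s + b * t) ^ 2 * (c * s + d * t)) (g₁ j) (g₂ j) from rfl, h]
    rw [mul_smul, CharTwo.two_nsmul, add_zero]
    linear_combination (-2*b*d^2 + 2*b*d^2*ω + -1*b*d^2*ω^3 + b*d^2*ω^4 + 2*b*c*d + -2*b*c*d*ω + 2*b*c*d*ω^2 + b*c^2 + -2*b^2*d + 2*b^2*d*ω + -1*b^2*d*ω^3 + b^2*d*ω^4 + b^2*c + -1*b^2*c*ω + b^2*c*ω^2 + a*d^2 + -1*a*d^2*ω + a*d^2*ω^2 + 2*a*c*d + 2*a*b*d + -2*a*b*d*ω + 2*a*b*d*ω^2 + 2*a*b*c + a^2*d) * hω + (b*d^2 + b^2*d + 2*a*c^2 + 2*a^2*c) * h2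
  -- weight formula
  have hwt : ∀ u : Fin (4 + 2 * m) → F4, wt u = ∑ j, if u j ≠ 0 then 1 else 0 := by
    intro u
    rw [wt, Set.ncard_eq_toFinset_card', Set.toFinset_setOf, Finset.card_filter]
  have hwt2 : ∀ a b : F4, wt (a • g₁ + b • g₂)
      = ((if a * 1 + b * 0 ≠ 0 then 1 else 0) + (if a * 1 + b * 1 ≠ 0 then 1 else 0)
        + (if a * 1 + b * ω ≠ 0 then 1 else 0) + (if a * 1 + b * ω ^ 2 ≠ 0 then 1 else 0)
        + (2 * m) • (if a * 0 + b * 1 ≠ 0 then 1 else 0) : ℕ) := by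
    intro a b
    rw [hwt]
    exact hsum (fun s t => if a * s + b * t ≠ 0 then 1 else 0)
  -- counting lemma: for b ≠ 0, exactly three of the four head coordinates are nonzero
  have hcount3 : ∀ a b : F4, b ≠ 0 →
      ((if a * 1 + b * 0 ≠ 0 then 1 else 0) + (if a * 1 + b * 1 ≠ 0 then 1 else 0)
        + (if a * 1 + b * ω ≠ 0 then 1 else 0) + (if a * 1 + b * ω ^ 2 ≠ 0 then 1 else 0) : ℕ)
        = 3 := by
    intro a b hb
    have ha : a = (a * b⁻¹) * b := by field_simp
    rcases hcases (a * b⁻¹) with h | h | h | h <;> rw [h] at ha <;> rw [ha]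
    · rw [if_neg (not_not.2 (by ring)),
        if_pos (show (0:F4) * b * 1 + b * 1 ≠ 0 from fun hh => hb (by linear_combination hh)),
        if_pos (show (0:F4) * b * 1 + b * ω ≠ 0 from
          fun hh => mul_ne_zero hb hω0 (by linear_combination hh)),
        if_pos (show (0:F4) * b * 1 + b * ω ^ 2 ≠ 0 from
          fun hh => mul_ne_zero hb hsqne0 (by linear_combination hh))]
    · rw [if_pos (show (1:F4) * b * 1 + b * 0 ≠ 0 from fun hh => hb (by linear_combination hh)),
        if_neg (not_not.2 (show (1:F4) * b * 1 + b * 1 = 0 by linear_combination b * h2)),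
        if_pos (show (1:F4) * b * 1 + b * ω ≠ 0 from
          fun hh => mul_ne_zero hb hω1 (by linear_combination hh)),
        if_pos (show (1:F4) * b * 1 + b * ω ^ 2 ≠ 0 from
          fun hh => mul_ne_zero hb hω0 (by linear_combination b * hω - hh))]
    · rw [if_pos (show ω * b * 1 + b * 0 ≠ 0 from
          fun hh => mul_ne_zero hω0 hb (by linear_combination hh)),
        if_pos (show ω * b * 1 + b * 1 ≠ 0 from
          fun hh => mul_ne_zero hb hω1 (by linear_combination hh)),
        if_neg (not_not.2 (show ω * b * 1 + b * ω = 0 by linear_combination b * ω * h2)),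
        if_pos (show ω * b * 1 + b * ω ^ 2 ≠ 0 from
          fun hh => hb (by linear_combination b * hω - hh))]
    · rw [if_pos (show ω ^ 2 * b * 1 + b * 0 ≠ 0 from
          fun hh => mul_ne_zero hsqne0 hb (by linear_combination hh)),
        if_pos (show ω ^ 2 * b * 1 + b * 1 ≠ 0 from
          fun hh => mul_ne_zero hb hω0 (by linear_combination b * hω - hh)),
        if_pos (show ω ^ 2 * b * 1 + b * ω ≠ 0 from
          fun hh => hb (by linear_combination b * hω - hh)),
        if_neg (not_not.2 (show ω ^ 2 * b * 1 + b * ω ^ 2 = 0 by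
          linear_combination b * ω ^ 2 * h2))]
  -- finrank over F4
  have hrange : ({g₁, g₂} : Set (Fin (4 + 2 * m) → F4)) = Set.range ![g₁, g₂] := by
    simp only [Matrix.range_cons, Matrix.range_empty, Set.union_empty, Set.union_singleton]
    exact Set.pair_comm g₁ g₂
  have hli : LinearIndependent F4 ![g₁, g₂] := by
    rw [LinearIndependent.pair_iff]
    intro s t hst
    have h0 := congrFun hst ⟨0, by omega⟩
    have h1 := congrFun hst ⟨1, by omega⟩
    simp [hg₁, hg₂] at h0 h1
    subst h0
    simpa using h1
  have hfr4 : Module.finrank F4 C = 2 := by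
    show Module.finrank F4 (Submodule.span F4 {g₁, g₂}) = 2
    rw [hrange, finrank_span_eq_card hli, Fintype.card_fin]
  -- the radical
  have hRset : (R : Set (Fin (4 + 2 * m) → F4)) = {x | ∃ c : F4, x = c • g₁} := by
    ext x
    simp only [SetLike.mem_coe, Set.mem_setOf_eq]
    constructor
    · intro hx
      obtain ⟨hxC, hxD⟩ := (hmemR x).1 hx
      obtain ⟨a, b, rfl⟩ := (hmemC x).1 hxC
      have hv : (0 : F4) • g₁ + (b * ω) • g₂ ∈ C := (hmemC _).2 ⟨0, b * ω, rfl⟩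
      have hz := hxD _ hv
      rw [hkey a b 0 (b * ω)] at hz
      have hb3 : b ^ 3 = 0 := by linear_combination b ^ 3 * hω - hz
      have hb : b = 0 := pow_eq_zero_iff (three_ne_zero) |>.1 hb3
      exact ⟨a, by rw [hb, zero_smul, add_zero]⟩
    · rintro ⟨c, rfl⟩
      refine (hmemR _).2 ⟨(hmemC _).2 ⟨c, 0, by rw [zero_smul, add_zero]⟩, ?_⟩
      intro v hv
      obtain ⟨p, q, rfl⟩ := (hmemC v).1 hv
      have h := hkey c 0 p q
      rw [zero_smul, add_zero] at h
      rw [h]; ring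
  -- finrank of R over F2
  have hL : IsLinearMap F2 (fun c : F4 => c • g₁) :=
    ⟨fun x y => add_smul x y g₁, fun r x => smul_assoc r x g₁⟩
  have hLinj : Function.Injective (IsLinearMap.mk' _ hL) := by
    intro x y hxy
    have h := congrFun hxy ⟨0, by omega⟩
    simpa [IsLinearMap.mk', hg₁] using h
  have hReq : R = LinearMap.range (IsLinearMap.mk' _ hL) := by
    apply SetLike.coe_injective
    rw [hRset]
    ext x
    simp only [Set.mem_setOf_eq, SetLike.mem_coe, LinearMap.mem_range, IsLinearMap.mk'_apply]
    exact ⟨fun ⟨c, hc⟩ => ⟨c, hc.symm⟩, fun ⟨c, hc⟩ => ⟨c, hc.symm⟩⟩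
  have hfr2 : Module.finrank F2 R = 2 := by
    rw [hReq, LinearMap.finrank_range_of_inj hLinj]
    exact GaloisField.finrank 2 (by norm_num)
  -- weights in R
  have hwtR : ∀ x ∈ R, x ≠ 0 → wt x = 4 := by
    intro x hxR hx0
    have hx : x ∈ (R : Set (Fin (4 + 2 * m) → F4)) := hxR
    rw [hRset] at hx
    obtain ⟨c, rfl⟩ := hx
    have hc : c ≠ 0 := by rintro rfl; exact hx0 (zero_smul _ _)
    have h' : c • g₁ = c • g₁ + (0 : F4) • g₂ := by rw [zero_smul, add_zero]
    rw [h', hwt2]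
    rw [if_pos (show c * 1 + (0:F4) * 0 ≠ 0 from fun hh => hc (by linear_combination hh)),
      if_pos (show c * 1 + (0:F4) * 1 ≠ 0 from fun hh => hc (by linear_combination hh)),
      if_pos (show c * 1 + (0:F4) * ω ≠ 0 from fun hh => hc (by linear_combination hh)),
      if_pos (show c * 1 + (0:F4) * ω ^ 2 ≠ 0 from fun hh => hc (by linear_combination hh)),
      if_neg (not_not.2 (show c * 0 + (0:F4) * 1 = 0 by ring))]
    rw [smul_zero]
    norm_num
  -- weights outside R
  have hwtCR : ∀ x ∈ C, x ∉ R → wt x = 4 + 2 * m - 1 := by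
    intro x hxC hxR
    obtain ⟨a, b, rfl⟩ := (hmemC x).1 hxC
    have hb : b ≠ 0 := by
      rintro rfl
      exact hxR (show _ ∈ (R : Set (Fin (4 + 2 * m) → F4)) from
        hRset ▸ ⟨a, by rw [zero_smul, add_zero]⟩)
    rw [hwt2, hcount3 a b hb,
      if_pos (show a * 0 + b * 1 ≠ 0 from fun hh => hb (by linear_combination hh))]
    rw [smul_eq_mul]
    omega
  -- cardinality count
  have hsubCR : (R : Set (Fin (4 + 2 * m) → F4)) ⊆ (C : Set (Fin (4 + 2 * m) → F4)) :=
    fun x hx => ((hmemR x).1 hx).1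
  have hCcard : Nat.card C = 16 := by
    haveI : Fintype C := Fintype.ofFinite _
    rw [Nat.card_eq_fintype_card, Module.card_eq_pow_finrank (K := F4), hfr4, hcard4]
    norm_num
  have hRcard : Nat.card R = 4 := by
    haveI : Fintype R := Fintype.ofFinite _
    rw [Nat.card_eq_fintype_card, Module.card_eq_pow_finrank (K := F2), hfr2, ZMod.card]
    norm_num
  have hcount : ((C : Set (Fin (4 + 2 * m) → F4)) \ (R : Set (Fin (4 + 2 * m) → F4))).ncard
      = 12 := by
    rw [Set.ncard_diff hsubCR (Set.toFinite _)]
    have hC' : (C : Set (Fin (4 + 2 * m) → F4)).ncard = 16 := by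
      rw [← Nat.card_coe_set_eq]; exact hCcard
    have hR' : (R : Set (Fin (4 + 2 * m) → F4)).ncard = 4 := by
      rw [← Nat.card_coe_set_eq]; exact hRcard
    rw [hC', hR']
  exact ⟨hfr4, hRset, hfr2, hwtR, hwtCR, hcount⟩
end
end

section
/- Let s ≥ 1, m ≥ 0, and n = 8s + 1 + 2m ≥ 9. Define vectors in F₄ⁿ: for i = 1,…,2s let rᵢ have entry 1 in coordinates 4(i−1)+1,…,4i and 0 elsewhere, and let r_{2s+1} consist of the block D = (0,1,ω,ω²) repeated 2s times followed by 2m+1 entries equal to 1. Let C be the F₄-span of r₁,…,r_{2s+1}. Then: (i) dim_{F₄} C = 2s+1 and the minimum Hamming weight of C is 4; (ii) the trace radical R = C ∩ C^{⊥t} equals the F₄-span of r₁,…,r_{2s}, so dim_{F₂} R = 4s; and (iii) every element of C \ R (there are 3·4^{2s} of them) has Hamming weight exactly n − 2s. (Hence C normalizes an [[n, 1, n−2s; n−4s−1]] EAQECC saturating the EA-Singleton bound.) -/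
noncomputable section

/-!
Write a codeword as `∑ cᵢ rᵢ` and put `b = c_{2s+1}`. In block `i` its coordinates are
`cᵢ + b·D`, where `D = (0, 1, ω, ω²)` runs once through `F₄`, and its last `2m + 1` coordinates
all equal `b`. Since `∑_{x ∈ F₄} xᵏ` is `0` for `k < 3` and `1` for `k = 3`, every block
contributes `(b, b')ₜ` to the trace inner product of two codewords, as does every tail
coordinate; there are `2s + 2m + 1` contributions, an odd number, so the product is `(b, b')ₜ`.
The trace form of `F₄` is nondegenerate, hence the radical is the subcode `b = 0`. If `b ≠ 0`,
`x ↦ cᵢ + b x` is a bijection of `F₄`, so each block has exactly one zero coordinate and the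
weight is `n - 2s`; if `b = 0`, each block is constant and the weight is a multiple of `4`.
-/

open Finset Submodule

instance : Fintype F4 := Fintype.ofFinite F4

instance : DecidableEq F4 := Classical.decEq F4

theorem natCard_F4 : Nat.card F4 = 4 := GaloisField.card 2 2 (by norm_num)

theorem card_F4 : Fintype.card F4 = 4 := by
  rw [Fintype.card_eq_nat_card, natCard_F4]

def traceForm (x y : F4) : F4 := x * y ^ 2 + x ^ 2 * y

theorem trInner_eq_sum_traceForm {n : ℕ} (u v : Fin n → F4) :
    trInner u v = ∑ j, traceForm (u j) (v j) := rfl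

def blockD (ω : F4) : Fin 4 → F4 := ![0, 1, ω, ω ^ 2]

section PrimitiveCubeRoot

variable {ω : F4} (hω : ω ^ 2 + ω + 1 = 0)
include hω

theorem blockD_bijective : Function.Bijective (blockD ω) := by
  have h2 : (2 : F4) = 0 := CharTwo.two_eq_zero
  have h0 : ω ≠ 0 := by rintro rfl; norm_num at hω
  have h1 : ω ≠ 1 := by rintro rfl; exact one_ne_zero (by linear_combination hω - h2)
  have hsq0 : ω ^ 2 ≠ 0 := pow_ne_zero 2 h0
  have hsq1 : ω ^ 2 ≠ 1 := fun h => h0 (by linear_combination hω - h - h2)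
  have hsq : ω ^ 2 ≠ ω := fun h => one_ne_zero (by linear_combination hω - h - ω * h2)
  refine (Fintype.bijective_iff_injective_and_card _).mpr ⟨?_, by simp [card_F4]⟩
  intro i j hij
  fin_cases i <;> fin_cases j <;>
    simp [blockD, h0, h1, hsq, h0.symm, h1.symm, hsq0.symm, hsq1.symm, hsq.symm,
      CharTwo.neg_eq] at hij ⊢

theorem sum_comp_blockD {M : Type*} [AddCommMonoid M] (f : F4 → M) :
    ∑ t, f (blockD ω t) = ∑ x, f x :=
  Fintype.sum_bijective _ (blockD_bijective hω) _ _ fun _ => rfl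

theorem sum_pow_three_F4 : ∑ x : F4, x ^ 3 = 1 := by
  rw [← sum_comp_blockD hω, Fin.sum_univ_four]
  change (0 : F4) ^ 3 + 1 ^ 3 + ω ^ 3 + (ω ^ 2) ^ 3 = 1
  linear_combination ω ^ 3 * (ω - 1) * hω + ω ^ 3 * (CharTwo.two_eq_zero : (2 : F4) = 0)

theorem sum_traceForm_blockD (a b a' b' : F4) :
    ∑ t, traceForm (a + b * blockD ω t) (a' + b' * blockD ω t) = traceForm b b' := by
  rw [sum_comp_blockD hω fun x => traceForm (a + b * x) (a' + b' * x)]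
  have hpow : ∀ k < 3, ∑ x : F4, x ^ k = 0 := fun k hk =>
    FiniteField.sum_pow_lt_card_sub_one (K := F4) k (by rw [card_F4]; omega)
  have hexp : ∀ x : F4, traceForm (a + b * x) (a' + b' * x) =
      (a * a' ^ 2 + a ^ 2 * a') * x ^ 0 + (b * a' ^ 2 + a ^ 2 * b') * x ^ 1
        + (a * b' ^ 2 + b ^ 2 * a') * x ^ 2 + traceForm b b' * x ^ 3 := fun x => by
    unfold traceForm
    linear_combination (a' * b' * x * (a + b * x) + a * b * x * (a' + b' * x)) *
      (CharTwo.two_eq_zero : (2 : F4) = 0)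
  simp only [hexp, sum_add_distrib, ← mul_sum, hpow 0 (by norm_num), hpow 1 (by norm_num),
    hpow 2 (by norm_num), sum_pow_three_F4 hω]
  ring

theorem sum_blockD_affine_ne_zero (a b : F4) (hb : b ≠ 0) :
    ∑ t, (if a + b * blockD ω t ≠ 0 then 1 else 0 : ℕ) = 3 := by
  rw [sum_comp_blockD hω fun x => if a + b * x ≠ 0 then 1 else 0]
  have hbij : Function.Bijective fun x : F4 => a + b * x :=
    Finite.injective_iff_bijective.mp
      ((add_right_injective a).comp (mul_right_injective₀ hb))
  rw [Fintype.sum_bijective _ hbij _ (fun y => if y ≠ 0 then 1 else 0) fun _ => rfl,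
    sum_boole, filter_ne', card_erase_of_mem (mem_univ _), card_univ, card_F4]
  rfl

theorem eq_zero_of_traceForm_eq_zero {b : F4} (h : ∀ y, traceForm b y = 0) : b = 0 := by
  by_contra hb
  have h1 : b * (1 + b) = 0 := by
    have := h 1
    unfold traceForm at this
    linear_combination this
  have hb1 : b = 1 := by
    linear_combination (mul_eq_zero.mp h1).resolve_left hb - (CharTwo.two_eq_zero : (2 : F4) = 0)
  have := h ω
  rw [hb1, traceForm] at this
  exact one_ne_zero (by linear_combination hω - this)

end PrimitiveCubeRoot

theorem Fin.sum_univ_eq_sum_blocks {M : Type*} [AddCommMonoid M] {N L n : ℕ}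
    (hn : n = 4 * N + L) (f : Fin n → M) :
    ∑ j, f j = ∑ i : Fin N, ∑ t : Fin 4, f ⟨4 * i + t, by omega⟩
      + ∑ k : Fin L, f ⟨4 * N + k, by omega⟩ := by
  subst hn
  rw [Fin.sum_univ_add, ← (finCongr (Nat.mul_comm N 4)).sum_comp,
    ← finProdFinEquiv.sum_comp, Fintype.sum_prod_type]
  congr 1
  refine sum_congr rfl fun i _ => sum_congr rfl fun t _ => congrArg f (Fin.ext ?_)
  simp [finProdFinEquiv, add_comm]

theorem wt_eq_sum {n : ℕ} (u : Fin n → F4) : wt u = ∑ j, if u j ≠ 0 then 1 else 0 := by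
  rw [wt, sum_boole, ← Set.ncard_coe_finset]
  simp

def blockRow (n i : ℕ) : Fin n → F4 := fun j => if (j : ℕ) / 4 = i then 1 else 0

def lastRow (ω : F4) (s n : ℕ) : Fin n → F4 := fun j =>
  if (j : ℕ) < 8 * s then
    (if (j : ℕ) % 4 = 0 then 0 else if (j : ℕ) % 4 = 1 then 1 else
     if (j : ℕ) % 4 = 2 then ω else ω ^ 2)
  else 1

def rows (ω : F4) (s n : ℕ) : Fin (2 * s + 1) → Fin n → F4 :=
  Fin.snoc (α := fun _ => Fin n → F4) (fun i => blockRow n i) (lastRow ω s n)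

def codeword (ω : F4) (s n : ℕ) (c : Fin (2 * s + 1) → F4) : Fin n → F4 :=
  ∑ i, c i • rows ω s n i

section Code

variable {ω : F4} {s n : ℕ}

theorem codeword_eq (c : Fin (2 * s + 1) → F4) :
    codeword ω s n c = ∑ i : Fin (2 * s), c i.castSucc • blockRow n i
      + c (Fin.last _) • lastRow ω s n := by
  simp [codeword, rows, Fin.sum_univ_castSucc]

theorem codeword_apply_block (c : Fin (2 * s + 1) → F4) (i : Fin (2 * s)) (t : Fin 4)
    (h : 4 * (i : ℕ) + t < n) :
    codeword ω s n c ⟨4 * i + t, h⟩ = c i.castSucc + c (Fin.last _) * blockD ω t := by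
  have hrow : ∀ i' : Fin (2 * s), blockRow n i' ⟨4 * i + t, h⟩ = if i' = i then 1 else 0 := by
    intro i'
    simp only [blockRow, Fin.ext_iff]
    split_ifs <;> first | rfl | omega
  have hlast : lastRow ω s n ⟨4 * i + t, h⟩ = blockD ω t := by
    have hlt : 4 * (i : ℕ) + t < 8 * s := by omega
    have hmod : (4 * (i : ℕ) + t) % 4 = t := by omega
    simp only [lastRow, hlt, if_true, hmod]
    fin_cases t <;> rfl
  simp [codeword_eq, hrow, hlast]

theorem codeword_apply_of_le (c : Fin (2 * s + 1) → F4) {j : ℕ} (hj : 8 * s ≤ j) (h : j < n) :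
    codeword ω s n c ⟨j, h⟩ = c (Fin.last _) := by
  have hrow : ∀ i : Fin (2 * s), blockRow n i ⟨j, h⟩ = 0 := fun i => by
    simp only [blockRow, ite_eq_right_iff]
    omega
  simp [codeword_eq, hrow, lastRow, hj.not_gt]

theorem trInner_codeword {m : ℕ} (hn : n = 8 * s + 1 + 2 * m) (hω : ω ^ 2 + ω + 1 = 0)
    (c d : Fin (2 * s + 1) → F4) :
    trInner (codeword ω s n c) (codeword ω s n d) =
      traceForm (c (Fin.last _)) (d (Fin.last _)) := by
  rw [trInner_eq_sum_traceForm, Fin.sum_univ_eq_sum_blocks (N := 2 * s) (L := 2 * m + 1) (by omega)]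
  simp (disch := omega) only [codeword_apply_block, codeword_apply_of_le, sum_traceForm_blockD hω,
    sum_const, card_univ, Fintype.card_fin, nsmul_eq_mul]
  push_cast
  linear_combination ((s : F4) + m) * traceForm (c (Fin.last _)) (d (Fin.last _)) *
    (CharTwo.two_eq_zero : (2 : F4) = 0)

theorem wt_codeword_of_last_ne_zero {m : ℕ} (hn : n = 8 * s + 1 + 2 * m)
    (hω : ω ^ 2 + ω + 1 = 0) (c : Fin (2 * s + 1) → F4) (hc : c (Fin.last _) ≠ 0) :
    wt (codeword ω s n c) = n - 2 * s := by
  rw [wt_eq_sum, Fin.sum_univ_eq_sum_blocks (N := 2 * s) (L := 2 * m + 1) (by omega)]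
  simp (disch := omega) only [codeword_apply_block, codeword_apply_of_le,
    sum_blockD_affine_ne_zero hω _ _ hc,
    if_pos hc, sum_const, card_univ, Fintype.card_fin, smul_eq_mul]
  omega

theorem wt_codeword_of_last_eq_zero {m : ℕ} (hn : n = 8 * s + 1 + 2 * m)
    (c : Fin (2 * s + 1) → F4) (hc : c (Fin.last _) = 0) :
    wt (codeword ω s n c) = 4 * #{i : Fin (2 * s) | c i.castSucc ≠ 0} := by
  rw [wt_eq_sum, Fin.sum_univ_eq_sum_blocks (N := 2 * s) (L := 2 * m + 1) (by omega)]
  simp (disch := omega) only [codeword_apply_block, codeword_apply_of_le, hc,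
    zero_mul, add_zero, ne_eq, not_true_eq_false, if_false, sum_const_zero, sum_const,
    card_univ, Fintype.card_fin, smul_eq_mul, ← mul_sum, sum_boole, Nat.cast_id]

theorem wt_codeword_single_castSucc {m : ℕ} (hn : n = 8 * s + 1 + 2 * m) (i : Fin (2 * s)) :
    wt (codeword ω s n (Pi.single i.castSucc 1)) = 4 := by
  rw [wt_codeword_of_last_eq_zero hn _ (by simp [Fin.castSucc_ne_last])]
  simp [Pi.single_apply, Fin.castSucc_inj, filter_eq']

theorem four_le_wt_codeword {m : ℕ} (hn : n = 8 * s + 1 + 2 * m) (hs : 1 ≤ s)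
    (hω : ω ^ 2 + ω + 1 = 0) (c : Fin (2 * s + 1) → F4) (hc : codeword ω s n c ≠ 0) :
    4 ≤ wt (codeword ω s n c) := by
  by_cases hlast : c (Fin.last _) = 0
  · rw [wt_codeword_of_last_eq_zero hn c hlast]
    suffices #{i : Fin (2 * s) | c i.castSucc ≠ 0} ≠ 0 by omega
    rw [Ne, card_eq_zero, filter_eq_empty_iff]
    intro hzero
    refine hc ?_
    have : c = 0 := funext fun i =>
      Fin.lastCases hlast (fun i => by simpa using hzero (mem_univ i)) i
    simp [codeword, this]
  · rw [wt_codeword_of_last_ne_zero hn hω c hlast]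
    omega

theorem linearIndependent_rows (h : 8 * s < n) : LinearIndependent F4 (rows ω s n) := by
  refine Fintype.linearIndependent_iff.mpr fun c hc => ?_
  change codeword ω s n c = 0 at hc
  have hlast : c (Fin.last _) = 0 := by
    simpa [codeword_apply_of_le c le_rfl h] using congrFun hc ⟨8 * s, h⟩
  refine Fin.lastCases hlast fun i => ?_
  have := congrFun hc ⟨4 * i + (0 : Fin 4), by omega⟩
  rw [codeword_apply_block] at this
  simpa [hlast] using this

theorem linearIndependent_blockRow (h : 8 * s < n) :
    LinearIndependent F4 fun i : Fin (2 * s) => blockRow n i := by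
  simpa [rows, Function.comp_def] using
    (linearIndependent_rows (ω := 0) h).comp _ (Fin.castSucc_injective _)

theorem image_rows_lt : rows ω s n '' {i | (i : ℕ) < 2 * s} =
    Set.range fun i : Fin (2 * s) => blockRow n i := by
  rw [← Fin.range_castSucc, ← Set.range_comp]
  congr 1
  funext i
  simp [rows]

theorem mem_span_blockRow_iff {v : Fin n → F4} :
    v ∈ span F4 (Set.range fun i : Fin (2 * s) => blockRow n i) ↔
      ∃ c, c (Fin.last _) = 0 ∧ codeword ω s n c = v := by
  rw [mem_span_range_iff_exists_fun]
  constructor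
  · rintro ⟨a, rfl⟩
    exact ⟨Fin.snoc a 0, by simp, by simp [codeword_eq]⟩
  · rintro ⟨c, hc, rfl⟩
    exact ⟨fun i => c i.castSucc, by simp [codeword_eq, hc]⟩

def traceRadical {n : ℕ} (C : Submodule F4 (Fin n → F4)) : Submodule F2 (Fin n → F4) :=
  C.restrictScalars F2 ⊓ trDualSub C

theorem mem_traceRadical_span_rows_iff {m : ℕ} (hn : n = 8 * s + 1 + 2 * m)
    (hω : ω ^ 2 + ω + 1 = 0) {v : Fin n → F4} :
    v ∈ traceRadical (span F4 (Set.range (rows ω s n))) ↔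
      ∃ c, c (Fin.last _) = 0 ∧ codeword ω s n c = v := by
  have hmem : ∀ w, w ∈ span F4 (Set.range (rows ω s n)) ↔ ∃ c, codeword ω s n c = w :=
    fun w => mem_span_range_iff_exists_fun F4
  constructor
  · rintro ⟨hvC, hvD⟩
    obtain ⟨c, rfl⟩ := (hmem v).mp hvC
    refine ⟨c, eq_zero_of_traceForm_eq_zero hω fun y => ?_, rfl⟩
    have := hvD _ ((hmem _).mpr ⟨Pi.single (Fin.last _) y, rfl⟩)
    rwa [trInner_codeword hn hω, Pi.single_eq_same] at this
  · rintro ⟨c, hc, rfl⟩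
    refine ⟨(hmem _).mpr ⟨c, rfl⟩, fun w hw => ?_⟩
    obtain ⟨d, rfl⟩ := (hmem w).mp hw
    simp [trInner_codeword hn hω, hc, traceForm]

theorem traceRadical_span_rows {m : ℕ} (hn : n = 8 * s + 1 + 2 * m) (hω : ω ^ 2 + ω + 1 = 0) :
    traceRadical (span F4 (Set.range (rows ω s n))) =
      (span F4 (rows ω s n '' {i | (i : ℕ) < 2 * s})).restrictScalars F2 := by
  ext v
  rw [restrictScalars_mem, image_rows_lt, mem_span_blockRow_iff]
  exact mem_traceRadical_span_rows_iff hn hω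

theorem natCard_span_rows (h : 8 * s < n) :
    Nat.card (span F4 (Set.range (rows ω s n))) = 4 ^ (2 * s + 1) := by
  rw [Module.natCard_eq_pow_finrank (K := F4), finrank_span_eq_card (linearIndependent_rows h),
    natCard_F4, Fintype.card_fin]

theorem natCard_traceRadical_span_rows {m : ℕ} (hn : n = 8 * s + 1 + 2 * m)
    (hω : ω ^ 2 + ω + 1 = 0) :
    Nat.card (traceRadical (span F4 (Set.range (rows ω s n)))) = 4 ^ (2 * s) := by
  rw [traceRadical_span_rows hn hω, image_rows_lt]
  change Nat.card (span F4 (Set.range fun i : Fin (2 * s) => blockRow n i)) = _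
  rw [Module.natCard_eq_pow_finrank (K := F4),
    finrank_span_eq_card (linearIndependent_blockRow (by omega)),
    natCard_F4, Fintype.card_fin]

theorem finrank_traceRadical_span_rows {m : ℕ} (hn : n = 8 * s + 1 + 2 * m)
    (hω : ω ^ 2 + ω + 1 = 0) :
    Module.finrank F2 (traceRadical (span F4 (Set.range (rows ω s n)))) = 4 * s := by
  have hcard := Module.natCard_eq_pow_finrank (K := F2)
    (V := traceRadical (span F4 (Set.range (rows ω s n))))
  rw [natCard_traceRadical_span_rows hn hω, Nat.card_zmod, show 4 = 2 ^ 2 by rfl, ← pow_mul]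
    at hcard
  have := Nat.pow_right_injective le_rfl hcard
  omega

theorem ncard_span_rows_diff_traceRadical {m : ℕ} (hn : n = 8 * s + 1 + 2 * m)
    (hω : ω ^ 2 + ω + 1 = 0) :
    ((span F4 (Set.range (rows ω s n)) : Set (Fin n → F4)) \
      (traceRadical (span F4 (Set.range (rows ω s n))) : Set (Fin n → F4))).ncard =
      3 * 4 ^ (2 * s) := by
  rw [Set.ncard_sdiff fun v hv => hv.1, ← Nat.card_coe_set_eq, ← Nat.card_coe_set_eq]
  change Nat.card (span F4 (Set.range (rows ω s n))) -
    Nat.card (traceRadical (span F4 (Set.range (rows ω s n)))) = _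
  rw [natCard_span_rows (by omega), natCard_traceRadical_span_rows hn hω, pow_succ]
  omega

theorem eq_rows {r : Fin (2 * s + 1) → Fin n → F4}
    (hr : ∀ i : Fin (2 * s + 1), (i : ℕ) < 2 * s → r i = blockRow n i)
    (hrlast : r (Fin.last _) = lastRow ω s n) : r = rows ω s n :=
  funext fun i => Fin.lastCases (by simpa [rows] using hrlast)
    (fun i => by simpa [rows] using hr i.castSucc (by simp)) i

end Code

/-- for `s ≥ 1` and `n = 8s + 1 + 2m`, the `F₄`-linear code `C` spanned by the
`2s` disjoint block rows `rᵢ = (0,…,0,1,1,1,1,0,…,0)` together with the row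
`(D, D, …, D, 1, …, 1)` where `D = (0, 1, ω, ω²)` is repeated `2s` times, has
`dim_{F₄} C = 2s + 1` and minimum weight 4, its trace radical `R = C ∩ C^{⊥t}` is the
`F₄`-span of the first `2s` rows (so `dim_{F₂} R = 4s`), and all `3·4^{2s}` elements of
`C \ R` have Hamming weight exactly `n - 2s`. -/
theorem stmt11 (s m n : ℕ) (hs : 1 ≤ s) (hn : n = 8 * s + 1 + 2 * m)
    (ω : F4) (hω : ω ^ 2 + ω + 1 = 0)
    (r : Fin (2 * s + 1) → Fin n → F4)
    (hr : ∀ i : Fin (2 * s + 1), (i : ℕ) < 2 * s →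
      r i = fun j : Fin n => if (j : ℕ) / 4 = (i : ℕ) then 1 else 0)
    (hrlast : ∀ i : Fin (2 * s + 1), (i : ℕ) = 2 * s →
      r i = fun j : Fin n => if (j : ℕ) < 8 * s then
        (if (j : ℕ) % 4 = 0 then 0 else if (j : ℕ) % 4 = 1 then 1 else
         if (j : ℕ) % 4 = 2 then ω else ω ^ 2)
        else 1) :
    let C := Submodule.span F4 (Set.range r)
    let R := C.restrictScalars F2 ⊓ trDualSub (C : Set (Fin n → F4))
    Module.finrank F4 C = 2 * s + 1 ∧
    (∀ v ∈ C, v ≠ 0 → 4 ≤ wt v) ∧ (∃ v ∈ C, v ≠ 0 ∧ wt v = 4) ∧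
    R = (Submodule.span F4 (r '' {i | (i : ℕ) < 2 * s})).restrictScalars F2 ∧
    Module.finrank F2 R = 4 * s ∧
    (∀ v ∈ C, v ∉ R → wt v = n - 2 * s) ∧
    ((C : Set (Fin n → F4)) \ (R : Set (Fin n → F4))).ncard = 3 * 4 ^ (2 * s) := by
  intro C R
  obtain rfl : r = rows ω s n := eq_rows hr (hrlast _ (by simp))
  have hmemC : ∀ v, v ∈ C ↔ ∃ c, codeword ω s n c = v := fun v =>
    mem_span_range_iff_exists_fun F4
  refine ⟨?_, ?_, ?_, traceRadical_span_rows hn hω, finrank_traceRadical_span_rows hn hω, ?_,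
    ncard_span_rows_diff_traceRadical hn hω⟩
  · rw [finrank_span_eq_card (linearIndependent_rows (by omega)), Fintype.card_fin]
  · rintro v hv hv0
    obtain ⟨c, rfl⟩ := (hmemC v).mp hv
    exact four_le_wt_codeword hn hs hω c hv0
  · have hwt := wt_codeword_single_castSucc (ω := ω) hn ⟨0, by omega⟩
    refine ⟨_, (hmemC _).mpr ⟨_, rfl⟩, fun h0 => ?_, hwt⟩
    rw [h0] at hwt
    simp [wt] at hwt
  · rintro v hv hvR
    obtain ⟨c, rfl⟩ := (hmemC v).mp hv
    refine wt_codeword_of_last_ne_zero hn hω c fun hc => hvR ?_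
    exact (mem_traceRadical_span_rows_iff hn hω).mpr ⟨c, hc, rfl⟩
end
end
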